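/- (Degree-bounded trivialization) Let C ∈ F⟨X⟩^{u×d} be a linear matrix and let v ∈ F⟨X⟩^{d×1} be a column vector of polynomials such that C·v = 0. Then there exists an invertible matrix N ∈ F⟨X⟩^{d×d} (a unit of F⟨X⟩^{d×d}) such that: (1) for every i with 1 ≤ i ≤ d, either the i-th column of C·N is all zeros or the i-th entry of N^{−1}·v is zero; and (2) every entry of N is a polynomial of degree at most d². -/

import Mathlib

open Matrix BigOperators

/-- The degree of an element of the free algebra: the maximal length of a word
with nonzero coefficient. -/
noncomputable def ncDeg {F : Type*} [Field F] {σ : Type*} (f : FreeAlgebra F σ) : ℕ :=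
  (((FreeAlgebra.equivMonoidAlgebraFreeMonoid (R := F) (X := σ)) f).coeff.support.sup fun w => FreeMonoid.length w)

/-- A noncommutative polynomial is irreducible if it has degree ≥ 1 and admits no
factorization into two factors of degree ≥ 1. -/
def NCIrred {F : Type*} [Field F] {σ : Type*} (f : FreeAlgebra F σ) : Prop :=
  1 ≤ ncDeg f ∧ ¬ ∃ g h : FreeAlgebra F σ, f = g * h ∧ 1 ≤ ncDeg g ∧ 1 ≤ ncDeg h

/-- The linear matrix `A0 + ∑ i, A i • x i` with scalar coefficient matrices. -/
noncomputable def linMatrix {F : Type*} [Field F] {σ α β : Type*} [Fintype σ]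
    (A0 : Matrix α β F) (A : σ → Matrix α β F) : Matrix α β (FreeAlgebra F σ) :=
  Matrix.of fun j k =>
    algebraMap F (FreeAlgebra F σ) (A0 j k) + ∑ i, A i j k • FreeAlgebra.ι F i

/-- A matrix over the free algebra is a linear matrix if each entry is an affine
linear form. -/
def IsLinearMat {F : Type*} [Field F] {σ α β : Type*} [Fintype σ]
    (M : Matrix α β (FreeAlgebra F σ)) : Prop :=
  ∃ (A0 : Matrix α β F) (A : σ → Matrix α β F), M = linMatrix A0 A

/-- A square matrix is full if it cannot be written as a product through a smaller
dimension. -/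
def IsFullMat {R : Type*} [Semiring R] {α : Type*} [Fintype α]
    (M : Matrix α α R) : Prop :=
  ¬ ∃ (e : ℕ) (_ : e < Fintype.card α)
      (M₁ : Matrix α (Fin e) R) (M₂ : Matrix (Fin e) α R), M = M₁ * M₂

/-- A full non-unit square matrix is an atom if it cannot be written as a product of
two full non-units. -/
def IsMatAtom {R : Type*} [Semiring R] {α : Type*} [Fintype α] [DecidableEq α]
    (M : Matrix α α R) : Prop :=
  IsFullMat M ∧ ¬ IsUnit M ∧
    ∀ A B : Matrix α α R, M = A * B →
      ¬ (IsFullMat A ∧ ¬ IsUnit A ∧ IsFullMat B ∧ ¬ IsUnit B)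

/-- The coefficient family `A` is right monic: `[A_1 A_2 ⋯ ]` has full row rank. -/
def RightMonicCoeffs {F : Type*} [Field F] {σ α : Type*} [Fintype σ] [Fintype α]
    (A : σ → Matrix α α F) : Prop :=
  (Matrix.of fun (j : α) (p : σ × α) => A p.1 j p.2).rank = Fintype.card α

/-- The coefficient family `A` is left monic: the stacked matrix has full column rank. -/
def LeftMonicCoeffs {F : Type*} [Field F] {σ α : Type*} [Fintype σ] [Fintype α]
    (A : σ → Matrix α α F) : Prop :=
  (Matrix.of fun (p : σ × α) (k : α) => A p.1 p.2 k).rank = Fintype.card α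

/-- A right monic linear matrix. -/
def IsRightMonicLinear {F : Type*} [Field F] {σ α : Type*} [Fintype σ] [Fintype α]
    (M : Matrix α α (FreeAlgebra F σ)) : Prop :=
  ∃ (A0 : Matrix α α F) (A : σ → Matrix α α F), M = linMatrix A0 A ∧ RightMonicCoeffs A

/-- A left monic linear matrix. -/
def IsLeftMonicLinear {F : Type*} [Field F] {σ α : Type*} [Fintype σ] [Fintype α]
    (M : Matrix α α (FreeAlgebra F σ)) : Prop :=
  ∃ (A0 : Matrix α α F) (A : σ → Matrix α α F), M = linMatrix A0 A ∧ LeftMonicCoeffs A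

/-- `M ⊕ I_k` : block diagonal with blocks `M` and the `k × k` identity. -/
def oplusId {R : Type*} [Semiring R] {d : ℕ} (M : Matrix (Fin d) (Fin d) R) (k : ℕ) :
    Matrix (Fin (d + k)) (Fin (d + k)) R :=
  Matrix.reindex finSumFinEquiv finSumFinEquiv (Matrix.fromBlocks M 0 0 1)

/-- A polynomial viewed as a `1 × 1` matrix. -/
def toMat1 {R : Type*} (f : R) : Matrix (Fin 1) (Fin 1) R := Matrix.of fun _ _ => f

/-- Block lower triangular matrix `[[A, 0], [D, B]]`. -/
def lowerBlocks {R : Type*} [Semiring R] {r s : ℕ}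
    (A : Matrix (Fin r) (Fin r) R) (D : Matrix (Fin s) (Fin r) R)
    (B : Matrix (Fin s) (Fin s) R) : Matrix (Fin (r + s)) (Fin (r + s)) R :=
  Matrix.reindex finSumFinEquiv finSumFinEquiv (Matrix.fromBlocks A 0 D B)

/-- `A` and `B` are stable associates: `A ⊕ I_t = P (B ⊕ I_t') Q` for units `P, Q`. -/
def StableAssoc {R : Type*} [Semiring R] {d d' : ℕ}
    (A : Matrix (Fin d) (Fin d) R) (B : Matrix (Fin d') (Fin d') R) : Prop :=
  ∃ (t t' : ℕ), 0 < t ∧ 0 < t' ∧ ∃ (h : d' + t' = d + t),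
    ∃ P Q : Matrix (Fin (d + t)) (Fin (d + t)) R, IsUnit P ∧ IsUnit Q ∧
      oplusId A t = P * Matrix.reindex (finCongr h) (finCongr h) (oplusId B t') * Q

/-- The dilated linear matrix `A0 ⊗ I_ℓ + ∑ i, A i ⊗ (Y i + M i)` in the matrix
variables `y_{i,j,k}`. -/
noncomputable def dilate {F : Type*} [Field F] {n d : ℕ}
    (A0 : Matrix (Fin d) (Fin d) F) (A : Fin n → Matrix (Fin d) (Fin d) F) (ℓ : ℕ)
    (M : Fin n → Matrix (Fin ℓ) (Fin ℓ) F) :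
    Matrix (Fin d × Fin ℓ) (Fin d × Fin ℓ) (FreeAlgebra F (Fin n × Fin ℓ × Fin ℓ)) :=
  Matrix.of fun p q =>
    algebraMap F (FreeAlgebra F (Fin n × Fin ℓ × Fin ℓ))
      (A0 p.1 q.1 * (if p.2 = q.2 then 1 else 0) + ∑ i, A i p.1 q.1 * M i p.2 q.2) +
      ∑ i : Fin n, A i p.1 q.1 • FreeAlgebra.ι F (i, p.2, q.2)

/-- The diagonal block of `M` corresponding to the fiber `b ⁻¹ {i}`, reindexed by `Fin`. -/
noncomputable def diagBlock {R : Type*} {d r : ℕ} (M : Matrix (Fin d) (Fin d) R)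
    (b : Fin d → Fin r) (i : Fin r) :
    Matrix (Fin (Fintype.card {j : Fin d // b j = i}))
      (Fin (Fintype.card {j : Fin d // b j = i})) R :=
  Matrix.of fun x y =>
    M ((Fintype.equivFin {j : Fin d // b j = i}).symm x : {j : Fin d // b j = i})
      ((Fintype.equivFin {j : Fin d // b j = i}).symm y : {j : Fin d // b j = i})

/-!
Induction on `d`: a unit of degree at most one makes the relation trivial at the last index and
keeps the first `d` columns of `C` linear, so the induction hypothesis applies to them, and the
degrees add up to at most `d`. Write `C = A₀ + ∑ₓ Aₓ x`. If `v ≠ 0`, let `w` be a longest word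
occurring in `v` and `t` the vector of coefficients of `w` in `v`: the coefficient of `x w` in
`C v = 0` is `Aₓ t`, so every `Aₓ` kills `t`, and a scalar unit with last column `t` makes the
last column of `C` constant. If that column is nonzero, with entry `s_b ≠ 0`, subtracting
multiples of it from the other columns clears row `b` outside the last entry, and row `b` of the
relation then forces the last entry of the transformed `v` to vanish.
-/

theorem exists_isUnit_mulVec_single_eq {K n : Type*} [Field K] [Fintype n] [DecidableEq n]
    {t : n → K} (ht : t ≠ 0) (i : n) : ∃ P : Matrix n n K, IsUnit P ∧ P *ᵥ Pi.single i 1 = t := by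
  obtain ⟨y, hyi, hyt⟩ : ∃ y : n → K, y i = 1 ∧ y ⬝ᵥ t ≠ 0 := by
    by_cases hti : t i = 0
    · obtain ⟨a, ha⟩ := Function.ne_iff.mp ht
      have hai : a ≠ i := by rintro rfl; exact ha hti
      exact ⟨Pi.single i 1 + Pi.single a 1, by simp [hai], by simpa [add_dotProduct, hti] using ha⟩
    · exact ⟨Pi.single i 1, by simp, by simpa using hti⟩
  -- `1 + (t - eᵢ) yᵀ` sends `eᵢ` to `t`; by the matrix determinant lemma its determinant
  -- is `y ⬝ᵥ t`.
  refine ⟨1 + vecMulVec (t - Pi.single i 1) y, ?_, ?_⟩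
  · rw [isUnit_iff_isUnit_det, vecMulVec_eq Unit, det_one_add_replicateCol_mul_replicateRow,
      dotProduct_sub, dotProduct_single, hyi, mul_one, add_sub_cancel]
    exact hyt.isUnit
  · rw [add_mulVec, one_mulVec, vecMulVec_mulVec, dotProduct_single, hyi, mul_one,
      MulOpposite.op_one, one_smul, add_sub_cancel]

theorem Matrix.mul_units_mul_inv_mul {R l m n : Type*} [Semiring R] [Fintype n] [DecidableEq n]
    (C : Matrix l n R) (U : (Matrix n n R)ˣ) (v : Matrix n m R) :
    C * (U : Matrix n n R) * ((↑U⁻¹ : Matrix n n R) * v) = C * v := by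
  rw [Matrix.mul_assoc, ← Matrix.mul_assoc (U : Matrix n n R), U.mul_inv, Matrix.one_mul]

def IsTrivialAt {R m κ : Type*} [Zero R] (C : Matrix m κ R) (v : Matrix κ (Fin 1) R) (i : κ) :
    Prop :=
  (∀ j, C j i = 0) ∨ v i 0 = 0

section TrivialRelation

variable {R : Type*} [Semiring R] {d : ℕ}

theorem oplusId_mul (M N : Matrix (Fin d) (Fin d) R) (k : ℕ) :
    oplusId (M * N) k = oplusId M k * oplusId N k := by
  simp [oplusId, fromBlocks_multiply, submatrix_mul_equiv]

theorem oplusId_one (k : ℕ) : oplusId (1 : Matrix (Fin d) (Fin d) R) k = 1 := by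
  simp [oplusId, fromBlocks_one]

def oplusIdHom (d k : ℕ) : Matrix (Fin d) (Fin d) R →* Matrix (Fin (d + k)) (Fin (d + k)) R where
  toFun M := oplusId M k
  map_one' := oplusId_one k
  map_mul' M N := oplusId_mul M N k

@[simp] theorem oplusId_apply_castSucc_castSucc (M : Matrix (Fin d) (Fin d) R) (i j : Fin d) :
    oplusId M 1 i.castSucc j.castSucc = M i j := by
  simp [oplusId, finSumFinEquiv_symm_apply_castSucc]

@[simp] theorem oplusId_apply_castSucc_last (M : Matrix (Fin d) (Fin d) R) (i : Fin d) :
    oplusId M 1 i.castSucc (Fin.last d) = 0 := by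
  simp [oplusId, finSumFinEquiv_symm_apply_castSucc, finSumFinEquiv_symm_last]

@[simp] theorem oplusId_apply_last_castSucc (M : Matrix (Fin d) (Fin d) R) (j : Fin d) :
    oplusId M 1 (Fin.last d) j.castSucc = 0 := by
  simp [oplusId, finSumFinEquiv_symm_apply_castSucc, finSumFinEquiv_symm_last]

@[simp] theorem oplusId_apply_last_last (M : Matrix (Fin d) (Fin d) R) :
    oplusId M 1 (Fin.last d) (Fin.last d) = 1 := by
  simp [oplusId, finSumFinEquiv_symm_last]

variable {u : ℕ} (C : Matrix (Fin u) (Fin (d + 1)) R) (v : Matrix (Fin (d + 1)) (Fin 1) R)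

theorem mul_oplusId_apply_castSucc (N : Matrix (Fin d) (Fin d) R) (k : Fin u) (i : Fin d) :
    (C * oplusId N 1) k i.castSucc = (C.submatrix id Fin.castSucc * N) k i := by
  simp [mul_apply, Fin.sum_univ_castSucc]

theorem mul_oplusId_apply_last (N : Matrix (Fin d) (Fin d) R) (k : Fin u) :
    (C * oplusId N 1) k (Fin.last d) = C k (Fin.last d) := by
  simp [mul_apply, Fin.sum_univ_castSucc]

theorem oplusId_mul_apply_castSucc (M : Matrix (Fin d) (Fin d) R) (i : Fin d) :
    (oplusId M 1 * v) i.castSucc 0 = (M * v.submatrix Fin.castSucc id) i 0 := by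
  simp [mul_apply, Fin.sum_univ_castSucc]

theorem oplusId_mul_apply_last (M : Matrix (Fin d) (Fin d) R) :
    (oplusId M 1 * v) (Fin.last d) 0 = v (Fin.last d) 0 := by
  simp [mul_apply, Fin.sum_univ_castSucc]

variable {C v}

theorem submatrix_castSucc_mul_eq_zero (hCv : C * v = 0) (hlast : IsTrivialAt C v (Fin.last d)) :
    C.submatrix id Fin.castSucc * v.submatrix Fin.castSucc id = 0 := by
  ext k l
  have hl : l = 0 := Subsingleton.elim l 0
  subst hl
  have hrow := congrFun (congrFun hCv k) 0
  rw [mul_apply, Fin.sum_univ_castSucc] at hrow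
  have hcorner : C k (Fin.last d) * v (Fin.last d) 0 = 0 := by
    rcases hlast with h | h <;> simp [h]
  simpa [hcorner, mul_apply] using hrow

theorem isTrivialAt_mul_oplusId (hlast : IsTrivialAt C v (Fin.last d))
    {N M : Matrix (Fin d) (Fin d) R}
    (h : ∀ i, IsTrivialAt (C.submatrix id Fin.castSucc * N) (M * v.submatrix Fin.castSucc id) i) :
    ∀ i, IsTrivialAt (C * oplusId N 1) (oplusId M 1 * v) i := by
  intro i
  induction i using Fin.lastCases with
  | last => simpa [IsTrivialAt, mul_oplusId_apply_last, oplusId_mul_apply_last] using hlast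
  | cast i => simpa [IsTrivialAt, mul_oplusId_apply_castSucc, oplusId_mul_apply_castSucc] using h i

end TrivialRelation

section NcCoeff

variable {R : Type*} [CommSemiring R] {σ : Type*}

noncomputable def ncSupport (f : FreeAlgebra R σ) : Finset (FreeMonoid σ) :=
  (FreeAlgebra.equivMonoidAlgebraFreeMonoid f).coeff.support

noncomputable def ncCoeff (f : FreeAlgebra R σ) (w : FreeMonoid σ) : R :=
  (FreeAlgebra.equivMonoidAlgebraFreeMonoid f).coeff w

theorem mem_ncSupport {f : FreeAlgebra R σ} {w : FreeMonoid σ} :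
    w ∈ ncSupport f ↔ ncCoeff f w ≠ 0 :=
  Finsupp.mem_support_iff

theorem ncSupport_nonempty {f : FreeAlgebra R σ} (hf : f ≠ 0) : (ncSupport f).Nonempty := by
  rw [ncSupport, Finsupp.support_nonempty_iff, Ne, MonoidAlgebra.coeff_eq_zero,
    AddEquivClass.map_eq_zero_iff]
  exact hf

@[simp] theorem ncCoeff_zero (w : FreeMonoid σ) : ncCoeff (0 : FreeAlgebra R σ) w = 0 := by
  simp [ncCoeff]

@[simp] theorem ncCoeff_add (f g : FreeAlgebra R σ) (w : FreeMonoid σ) :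
    ncCoeff (f + g) w = ncCoeff f w + ncCoeff g w := by
  simp [ncCoeff]

@[simp] theorem ncCoeff_sum {ι : Type*} (s : Finset ι) (f : ι → FreeAlgebra R σ)
    (w : FreeMonoid σ) : ncCoeff (∑ i ∈ s, f i) w = ∑ i ∈ s, ncCoeff (f i) w := by
  simp [ncCoeff]

@[simp] theorem ncCoeff_smul (a : R) (f : FreeAlgebra R σ) (w : FreeMonoid σ) :
    ncCoeff (a • f) w = a * ncCoeff f w := by
  simp [ncCoeff]

theorem ncCoeff_algebraMap_mul (a : R) (f : FreeAlgebra R σ) (w : FreeMonoid σ) :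
    ncCoeff (algebraMap R _ a * f) w = a * ncCoeff f w := by
  rw [← Algebra.smul_def, ncCoeff_smul]

theorem ncCoeff_ι_mul_of_mul [DecidableEq σ] (x y : σ) (f : FreeAlgebra R σ) (w : FreeMonoid σ) :
    ncCoeff (FreeAlgebra.ι R x * f) (FreeMonoid.of y * w) = if x = y then ncCoeff f w else 0 := by
  have hι : FreeAlgebra.equivMonoidAlgebraFreeMonoid (FreeAlgebra.ι R x) =
      MonoidAlgebra.single (FreeMonoid.of x) 1 := by
    simp [FreeAlgebra.equivMonoidAlgebraFreeMonoid]
  rw [ncCoeff, _root_.map_mul FreeAlgebra.equivMonoidAlgebraFreeMonoid, hι]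
  split_ifs with h
  · rw [h, MonoidAlgebra.coeff_single_mul_mul, one_mul, ncCoeff]
  · exact MonoidAlgebra.coeff_single_mul_of_forall_mul_ne _ _ fun d hd =>
      h (List.head_eq_of_cons_eq (congrArg FreeMonoid.toList hd))

end NcCoeff

section NcDeg

variable {F : Type*} [Field F] {σ : Type*}

theorem ncDeg_add_le (f g : FreeAlgebra F σ) : ncDeg (f + g) ≤ max (ncDeg f) (ncDeg g) := by
  classical
  unfold ncDeg
  rw [map_add, MonoidAlgebra.coeff_add, ← Finset.sup_union]
  exact Finset.sup_mono Finsupp.support_add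

theorem ncDeg_mul_le (f g : FreeAlgebra F σ) : ncDeg (f * g) ≤ ncDeg f + ncDeg g := by
  classical
  unfold ncDeg
  rw [_root_.map_mul FreeAlgebra.equivMonoidAlgebraFreeMonoid]
  refine Finset.sup_le fun w hw => ?_
  obtain ⟨a, ha, b, hb, rfl⟩ := Finset.mem_mul.mp (MonoidAlgebra.support_coeff_mul_subset _ _ hw)
  rw [FreeMonoid.length_mul]
  exact add_le_add (Finset.le_sup ha) (Finset.le_sup hb)

theorem ncDeg_sum_le {ι : Type*} (s : Finset ι) (f : ι → FreeAlgebra F σ) {k : ℕ}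
    (h : ∀ i ∈ s, ncDeg (f i) ≤ k) : ncDeg (∑ i ∈ s, f i) ≤ k :=
  Finset.sum_induction f (ncDeg · ≤ k) (fun _ _ hf hg => (ncDeg_add_le _ _).trans (max_le hf hg))
    (by simp [ncDeg]) h

theorem ncDeg_smul_le (a : F) (f : FreeAlgebra F σ) : ncDeg (a • f) ≤ ncDeg f := by
  unfold ncDeg
  rw [map_smul]
  exact Finset.sup_mono Finsupp.support_smul

theorem ncDeg_algebraMap (a : F) : ncDeg (algebraMap F (FreeAlgebra F σ) a) = 0 := by
  classical
  simp [ncDeg, Finsupp.single_apply]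

theorem ncDeg_ι_le (x : σ) : ncDeg (FreeAlgebra.ι F x) ≤ 1 := by
  simp [ncDeg, FreeAlgebra.equivMonoidAlgebraFreeMonoid]

@[simp] theorem ncDeg_zero : ncDeg (0 : FreeAlgebra F σ) = 0 := by simp [ncDeg]

@[simp] theorem ncDeg_one : ncDeg (1 : FreeAlgebra F σ) = 0 := by simp [ncDeg]

theorem ncDeg_matrix_mul_apply_le {l m n : Type*} [Fintype m]
    {M : Matrix l m (FreeAlgebra F σ)} {N : Matrix m n (FreeAlgebra F σ)} {a b : ℕ}
    (hM : ∀ i j, ncDeg (M i j) ≤ a) (hN : ∀ i j, ncDeg (N i j) ≤ b) (i : l) (j : n) :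
    ncDeg ((M * N) i j) ≤ a + b :=
  ncDeg_sum_le _ _ fun k _ => (ncDeg_mul_le _ _).trans (add_le_add (hM i k) (hN k j))

theorem ncDeg_matrix_one_apply {n : Type*} [DecidableEq n] (i j : n) :
    ncDeg ((1 : Matrix n n (FreeAlgebra F σ)) i j) = 0 := by
  by_cases h : i = j <;> simp [one_apply, h]

theorem ncDeg_oplusId_apply_le {d : ℕ} {N : Matrix (Fin d) (Fin d) (FreeAlgebra F σ)} {a : ℕ}
    (hN : ∀ i j, ncDeg (N i j) ≤ a) (k : ℕ) (i j : Fin (d + k)) :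
    ncDeg (oplusId N k i j) ≤ a := by
  simp only [oplusId, reindex_apply, submatrix_apply]
  rcases finSumFinEquiv.symm i with i | i <;> rcases finSumFinEquiv.symm j with j | j <;>
    simp [hN, ncDeg_matrix_one_apply]

end NcDeg

section LinearMatrix

variable {F : Type*} [Field F] {σ : Type*} [Fintype σ]

theorem IsLinearMat.ncDeg_apply_le {α β : Type*} {C : Matrix α β (FreeAlgebra F σ)}
    (hC : IsLinearMat C) (k : α) (j : β) : ncDeg (C k j) ≤ 1 := by
  obtain ⟨A0, A, rfl⟩ := hC
  rw [linMatrix, of_apply]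
  exact (ncDeg_add_le _ _).trans <| max_le (by simp [ncDeg_algebraMap]) <|
    ncDeg_sum_le _ _ fun x _ => (ncDeg_smul_le _ _).trans (ncDeg_ι_le x)

theorem IsLinearMat.submatrix {α β γ δ : Type*} {C : Matrix α β (FreeAlgebra F σ)}
    (hC : IsLinearMat C) (f : γ → α) (g : δ → β) : IsLinearMat (C.submatrix f g) := by
  obtain ⟨A0, A, rfl⟩ := hC
  exact ⟨A0.submatrix f g, fun x => (A x).submatrix f g, rfl⟩

theorem IsLinearMat.add_smul_row {α β : Type*} {C : Matrix α β (FreeAlgebra F σ)}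
    (hC : IsLinearMat C) (c : α → F) (b : α) :
    IsLinearMat (Matrix.of fun k j => C k j + c k • C b j) := by
  obtain ⟨A0, A, rfl⟩ := hC
  refine ⟨Matrix.of fun k j => A0 k j + c k * A0 b j,
    fun x => Matrix.of fun k j => A x k j + c k * A x b j, ?_⟩
  ext k j
  simp only [linMatrix, of_apply, Algebra.algebraMap_eq_smul_one, add_smul, Finset.sum_add_distrib,
    smul_add, Finset.smul_sum, smul_smul]
  abel

theorem linMatrix_mul_map {α β γ : Type*} [Fintype β] (A0 : Matrix α β F) (A : σ → Matrix α β F)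
    (K : Matrix β γ F) :
    linMatrix A0 A * K.map (algebraMap F (FreeAlgebra F σ)) =
      linMatrix (A0 * K) fun x => A x * K := by
  have hterm : ∀ (a c : F) (f : σ → F),
      (algebraMap F (FreeAlgebra F σ) a + ∑ x, f x • FreeAlgebra.ι F x) * algebraMap F _ c =
        algebraMap F _ (a * c) + ∑ x, (f x * c) • FreeAlgebra.ι F x := by
    intro a c f
    rw [← Algebra.commutes, ← Algebra.smul_def, smul_add, Finset.smul_sum, Algebra.smul_def c,
      ← map_mul, mul_comm c]
    simp_rw [smul_smul, mul_comm c]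
  ext k j
  simp only [linMatrix, mul_apply, of_apply, map_apply, hterm, Finset.sum_add_distrib, map_sum]
  rw [Finset.sum_comm]
  simp only [Finset.sum_smul]

theorem exists_ne_zero_forall_mulVec_eq_zero {ι κ : Type*} [Fintype κ] (A0 : Matrix ι κ F)
    (A : σ → Matrix ι κ F) {v : κ → FreeAlgebra F σ} (hv : v ≠ 0)
    (hAv : linMatrix A0 A *ᵥ v = 0) : ∃ t : κ → F, t ≠ 0 ∧ ∀ x, A x *ᵥ t = 0 := by
  classical
  obtain ⟨j₀, hj₀⟩ := Function.ne_iff.mp hv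
  set S := Finset.univ.biUnion fun j => ncSupport (v j)
  obtain ⟨w, hwS, hw⟩ := S.exists_max_image FreeMonoid.length <|
    (ncSupport_nonempty hj₀).mono (Finset.subset_biUnion_of_mem _ (Finset.mem_univ j₀))
  obtain ⟨j₁, -, hj₁⟩ := Finset.mem_biUnion.mp hwS
  -- As `w` is a longest word in `v`, the coefficient of `x * w` in `linMatrix A0 A *ᵥ v` is
  -- `A x *ᵥ t` for the coefficient vector `t` of `w`.
  have htop : ∀ j x, ncCoeff (v j) (FreeMonoid.of x * w) = 0 := by
    intro j x
    by_contra h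
    have := hw _ (Finset.mem_biUnion.mpr ⟨j, Finset.mem_univ j, mem_ncSupport.mpr h⟩)
    simp at this
  refine ⟨fun j => ncCoeff (v j) w, Function.ne_iff.mpr ⟨j₁, mem_ncSupport.mp hj₁⟩,
    fun x => funext fun k => ?_⟩
  have := congrArg (ncCoeff · (FreeMonoid.of x * w)) (congrFun hAv k)
  simpa [mulVec, dotProduct, linMatrix, add_mul, Finset.sum_mul, ncCoeff_algebraMap_mul,
    smul_mul_assoc, ncCoeff_ι_mul_of_mul, htop] using this

end LinearMatrix

section Trivialization

variable {F : Type*} [Field F] {σ : Type*} [Fintype σ] {u d : ℕ}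

local notation "𝕄" n => Matrix (Fin n) (Fin n) (FreeAlgebra F σ)

theorem exists_unit_isTrivialAt_last_of_const {C : Matrix (Fin u) (Fin (d + 1)) (FreeAlgebra F σ)}
    (hC : IsLinearMat C) {s : Fin u → F} (hs : ∀ k, C k (Fin.last d) = algebraMap F _ (s k))
    {v : Matrix (Fin (d + 1)) (Fin 1) (FreeAlgebra F σ)} (hCv : C * v = 0) :
    ∃ E : (𝕄 (d + 1))ˣ,
      (∀ i j, ncDeg ((E : 𝕄 (d + 1)) i j) ≤ 1) ∧
      IsLinearMat ((C * (E : 𝕄 (d + 1))).submatrix id Fin.castSucc) ∧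
      IsTrivialAt (C * (E : 𝕄 (d + 1))) ((↑E⁻¹ : 𝕄 (d + 1)) * v) (Fin.last d) := by
  by_cases hs0 : s = 0
  · exact ⟨1, fun i j => by simp [ncDeg_matrix_one_apply],
      by simpa using hC.submatrix id Fin.castSucc, Or.inl fun k => by simp [hs, hs0]⟩
  obtain ⟨b, hb⟩ : ∃ b, s b ≠ 0 := Function.ne_iff.mp hs0
  set r : Fin (d + 1) → FreeAlgebra F σ :=
    Function.update (fun j => (-(s b)⁻¹) • C b j) (Fin.last d) 0
  set Z := vecMulVec (Pi.single (Fin.last d) 1) r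
  have hZ : Z * Z = 0 := by simp [Z, vecMulVec_mul_vecMulVec, r]
  -- Right multiplication by `1 + Z` adds `r j` times the last column to column `j`: this clears
  -- row `b` outside its last entry `s b`.
  set E := (IsNilpotent.isUnit_one_add ⟨2, by rw [pow_two, hZ]⟩ : IsUnit (1 + Z)).unit
  have hCE : ∀ k j, (C * (E : 𝕄 (d + 1))) k j = C k j + algebraMap F _ (s k) * r j := by
    intro k j
    simp [E, Z, Matrix.mul_add, mul_vecMulVec, vecMulVec_apply, hs]
  refine ⟨E, ?_, ?_, Or.inr ?_⟩
  · intro i j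
    simp only [E, IsUnit.unit_spec, Matrix.add_apply, Z, vecMulVec_apply]
    have hsingle : ncDeg ((Pi.single (Fin.last d) 1 : Fin (d + 1) → FreeAlgebra F σ) i) = 0 := by
      rcases eq_or_ne i (Fin.last d) with rfl | hi <;> simp [*]
    have hr : ncDeg (r j) ≤ 1 := by
      rcases eq_or_ne j (Fin.last d) with rfl | hj
      · simp [r]
      · rw [show r j = (-(s b)⁻¹) • C b j from Function.update_of_ne hj _ _]
        exact (ncDeg_smul_le _ _).trans (hC.ncDeg_apply_le b j)
    refine (ncDeg_add_le _ _).trans (max_le (by simp [ncDeg_matrix_one_apply]) ?_)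
    exact (ncDeg_mul_le _ _).trans (by omega)
  · convert (hC.submatrix id Fin.castSucc).add_smul_row (fun k => -(s b)⁻¹ * s k) b using 1
    ext k j
    simp [hCE, r, (Fin.castSucc_lt_last j).ne, ← Algebra.smul_def, smul_smul]
  · have hrow : ∀ j, (C * (E : 𝕄 (d + 1))) b j =
        (Pi.single (Fin.last d) (algebraMap F _ (s b)) : Fin (d + 1) → FreeAlgebra F σ) j := by
      intro j
      rw [hCE]
      rcases eq_or_ne j (Fin.last d) with rfl | hj
      · simp [r, hs]
      · simp [r, hj, ← Algebra.smul_def, smul_smul, inv_mul_cancel₀ hb]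
    have := congrFun (congrFun ((C.mul_units_mul_inv_mul E v).trans hCv) b) 0
    rw [mul_apply, Fintype.sum_eq_single (Fin.last d) fun j hj => by
        rw [hrow, Pi.single_eq_of_ne hj, zero_mul],
      hrow, Pi.single_eq_same, Matrix.zero_apply] at this
    have hsb : IsUnit (algebraMap F (FreeAlgebra F σ) (s b)) := (isUnit_iff_ne_zero.mpr hb).map _
    exact hsb.mul_right_eq_zero.mp this

theorem exists_unit_isTrivialAt_last {C : Matrix (Fin u) (Fin (d + 1)) (FreeAlgebra F σ)}
    (hC : IsLinearMat C) {v : Matrix (Fin (d + 1)) (Fin 1) (FreeAlgebra F σ)} (hCv : C * v = 0) :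
    ∃ P : (𝕄 (d + 1))ˣ,
      (∀ i j, ncDeg ((P : 𝕄 (d + 1)) i j) ≤ 1) ∧
      IsLinearMat ((C * (P : 𝕄 (d + 1))).submatrix id Fin.castSucc) ∧
      IsTrivialAt (C * (P : 𝕄 (d + 1))) ((↑P⁻¹ : 𝕄 (d + 1)) * v) (Fin.last d) := by
  by_cases hv : v = 0
  · exact ⟨1, fun i j => by simp [ncDeg_matrix_one_apply],
      by simpa using hC.submatrix id Fin.castSucc, Or.inr (by simp [hv])⟩
  obtain ⟨A0, A, rfl⟩ := hC
  obtain ⟨t, ht, hAt⟩ := exists_ne_zero_forall_mulVec_eq_zero A0 A (v := fun j => v j 0)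
    (fun h => hv (by ext j l; fin_cases l; exact congrFun h j))
    (by ext k; simpa [mulVec, dotProduct, mul_apply] using congrFun (congrFun hCv k) 0)
  obtain ⟨K, hK, hKt⟩ := exists_isUnit_mulVec_single_eq ht (Fin.last d)
  set Kf : (𝕄 (d + 1))ˣ := Units.map (algebraMap F (FreeAlgebra F σ)).mapMatrix.toMonoidHom hK.unit
  have hCK : linMatrix A0 A * (Kf : 𝕄 (d + 1)) = linMatrix (A0 * K) fun x => A x * K :=
    linMatrix_mul_map A0 A K
  have hlast : ∀ k, linMatrix (A0 * K) (fun x => A x * K) k (Fin.last d) =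
      algebraMap F _ ((A0 * K) k (Fin.last d)) := by
    intro k
    have hAK : ∀ x, (A x * K) k (Fin.last d) = 0 := fun x => by
      have := congrFun (hAt x) k
      rwa [← hKt, mulVec_mulVec, mulVec_single_one, col_apply] at this
    simp [linMatrix, hAK]
  obtain ⟨E, hEdeg, hElin, hElast⟩ := exists_unit_isTrivialAt_last_of_const ⟨_, _, rfl⟩ hlast
    (v := (↑Kf⁻¹ : 𝕄 (d + 1)) * v) (by rw [← hCK, Matrix.mul_units_mul_inv_mul, hCv])
  refine ⟨Kf * E, fun i j => ?_, ?_, ?_⟩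
  · have hKf : ∀ i j, ncDeg ((Kf : 𝕄 (d + 1)) i j) ≤ 0 := fun i j => by
      simp [Kf, ncDeg_algebraMap]
    simpa using ncDeg_matrix_mul_apply_le hKf hEdeg i j
  · simpa [← Matrix.mul_assoc, hCK] using hElin
  · simpa [← Matrix.mul_assoc, hCK, _root_.mul_inv_rev] using hElast

theorem IsLinearMat.exists_unit_isTrivialAt {C : Matrix (Fin u) (Fin d) (FreeAlgebra F σ)}
    (hC : IsLinearMat C) {v : Matrix (Fin d) (Fin 1) (FreeAlgebra F σ)} (hCv : C * v = 0) :
    ∃ N : (𝕄 d)ˣ, (∀ i, IsTrivialAt (C * (N : 𝕄 d)) ((↑N⁻¹ : 𝕄 d) * v) i) ∧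
      ∀ i j, ncDeg ((N : 𝕄 d) i j) ≤ d := by
  induction d generalizing u with
  | zero => exact ⟨1, fun i => i.elim0, fun i => i.elim0⟩
  | succ d ih =>
    obtain ⟨P, hPdeg, hlin, hlast⟩ := exists_unit_isTrivialAt_last hC hCv
    obtain ⟨N, hN, hNdeg⟩ := ih hlin <|
      submatrix_castSucc_mul_eq_zero ((C.mul_units_mul_inv_mul P v).trans hCv) hlast
    refine ⟨P * Units.map (oplusIdHom d 1) N, ?_, fun i j => ?_⟩
    · simpa [oplusIdHom, Matrix.mul_assoc, _root_.mul_inv_rev] using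
        isTrivialAt_mul_oplusId hlast hN
    · have := ncDeg_matrix_mul_apply_le hPdeg (ncDeg_oplusId_apply_le hNdeg 1) i j
      simpa [oplusIdHom, add_comm] using this

end Trivialization

/-- Degree-bounded trivialization: if `C` is a linear matrix and `v` a
column of polynomials with `C · v = 0`, there is a unit `N` (with inverse `M`) such that
for each `i` either the `i`-th column of `C · N` is zero or the `i`-th entry of `N⁻¹ · v`
is zero, and every entry of `N` has degree at most `d²`. -/
theorem degree_bounded_trivialization {F : Type*} [Field F] {n u d : ℕ}
    (C : Matrix (Fin u) (Fin d) (FreeAlgebra F (Fin n))) (hC : IsLinearMat C)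
    (v : Matrix (Fin d) (Fin 1) (FreeAlgebra F (Fin n)))
    (hCv : C * v = 0) :
    ∃ N M : Matrix (Fin d) (Fin d) (FreeAlgebra F (Fin n)),
      N * M = 1 ∧ M * N = 1 ∧
      (∀ i : Fin d, (∀ j, (C * N) j i = 0) ∨ (M * v) i 0 = 0) ∧
      (∀ i j, ncDeg (N i j) ≤ d ^ 2) := by
  obtain ⟨N, hN, hdeg⟩ := hC.exists_unit_isTrivialAt hCv
  exact ⟨N, ↑N⁻¹, N.mul_inv, N.inv_mul, hN, fun i j =>
    (hdeg i j).trans (Nat.le_self_pow two_ne_zero d)⟩
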